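/- arXiv:2011.06120 — 4 statements merged into one kernel-verified Lean document; each statement's English description precedes it below -/
import Mathlib

section
/- For a Hermitian matrix M of order m > 1, the quantity EE(M) = Σ_{π,π' even} Π_{i=1}^m M_{π(i)π'(i)} is real. -/
open Finset in
theorem stmt_2 (m : ℕ) (hm : 1 < m) (M : Matrix (Fin m) (Fin m) ℂ)
    (hM : M.IsHermitian) :
    ∃ r : ℝ,
      (∑ π ∈ Finset.univ.filter (fun π : Equiv.Perm (Fin m) => Equiv.Perm.sign π = 1),
        ∑ π' ∈ Finset.univ.filter (fun π' : Equiv.Perm (Fin m) => Equiv.Perm.sign π' = 1),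
          ∏ i, M (π i) (π' i)) = (r : ℂ) := by
  set S := (∑ π ∈ Finset.univ.filter (fun π : Equiv.Perm (Fin m) => Equiv.Perm.sign π = 1),
        ∑ π' ∈ Finset.univ.filter (fun π' : Equiv.Perm (Fin m) => Equiv.Perm.sign π' = 1),
          ∏ i, M (π i) (π' i)) with hS
  have hconj : (starRingEnd ℂ) S = S := by
    rw [hS, map_sum]
    rw [Finset.sum_comm]
    refine Finset.sum_congr rfl fun π' _ => ?_
    rw [map_sum]
    refine Finset.sum_congr rfl fun π _ => ?_
    rw [map_prod]
    refine Finset.prod_congr rfl fun i _ => ?_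
    have := congrFun (congrFun hM (π i)) (π' i)
    simpa [Matrix.conjTranspose_apply] using this
  exact ⟨S.re, (Complex.conj_eq_iff_re.mp hconj).symm⟩
end

section
/- A Hermitian matrix M is positive semidefinite if and only if every principal submatrix of M has nonnegative determinant. -/
/-!
Multilinearity of the determinant in the rows gives `det (M + t • 1) = ∑ₛ t ^ #sᶜ * det M[s, s]`, a sum
over all principal minors. If they are all nonnegative, then `det (M + t • 1) > 0` for every
`t > 0` (the empty minor contributes `t ^ n`), so no `-t < 0` is an eigenvalue of the Hermitian
matrix `M`. Conversely every principal submatrix of a positive semidefinite matrix is positive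
semidefinite, hence has nonnegative determinant.
-/

open Finset

namespace Matrix

variable {n R : Type*} [Fintype n] [DecidableEq n]

theorem det_add_smul_one_eq_sum_principal_minors [CommRing R] (M : Matrix n n R) (t : R) :
    (M + t • 1).det = ∑ s : Finset n, t ^ sᶜ.card * (M.submatrix ((↑) : s → n) (↑)).det := by
  change detRowAlternating (M.row + (t • 1 : Matrix n n R).row) = _
  rw [AlternatingMap.map_add_univ]
  refine sum_congr rfl fun s _ => ?_
  have hrows : s.piecewise M.row (t • 1 : Matrix n n R).row =
      fun i => (if i ∈ s then 1 else t) • s.piecewise M.row (1 : Matrix n n R).row i := by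
    ext i j
    by_cases hi : i ∈ s <;> simp [piecewise, hi, row]
  have hprod : ∏ i, (if i ∈ s then 1 else t) = t ^ sᶜ.card := by
    simp [prod_ite, filter_not, compl_eq_univ_sdiff]
  rw [hrows, AlternatingMap.map_smul_univ, hprod, ← det_piecewise_one_eq_submatrix_det]
  rfl

theorem det_add_smul_one_pos [CommRing R] [PartialOrder R] [IsStrictOrderedRing R]
    {M : Matrix n n R} (hM : ∀ s : Finset n, 0 ≤ (M.submatrix ((↑) : s → n) (↑)).det)
    {t : R} (ht : 0 < t) : 0 < (M + t • 1).det := by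
  rw [det_add_smul_one_eq_sum_principal_minors]
  refine sum_pos' (fun s _ => mul_nonneg (pow_nonneg ht.le _) (hM s)) ⟨∅, mem_univ _, ?_⟩
  simpa only [det_isEmpty, mul_one] using pow_pos ht _

open scoped ComplexOrder in
theorem IsHermitian.posSemidef_of_det_add_smul_one_ne_zero {𝕜 : Type*} [RCLike 𝕜]
    {A : Matrix n n 𝕜} (hA : A.IsHermitian)
    (h : ∀ t : ℝ, 0 < t → (A + (t : 𝕜) • 1).det ≠ 0) : A.PosSemidef := by
  refine hA.posSemidef_iff_eigenvalues_nonneg.mpr fun j => ?_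
  by_contra hneg
  refine h (-hA.eigenvalues j) (by simpa using hneg) ?_
  rw [← exists_mulVec_eq_zero_iff]
  refine ⟨_, fun hv => hA.eigenvectorBasis.orthonormal.ne_zero j (WithLp.ofLp_injective 2 hv), ?_⟩
  rw [add_mulVec, smul_mulVec, one_mulVec, hA.mulVec_eigenvectorBasis, RCLike.real_smul_eq_coe_smul (K := 𝕜), RCLike.ofReal_neg, neg_smul, add_neg_cancel]

end Matrix

open ComplexOrder in
theorem stmt_9 {n : ℕ} (M : Matrix (Fin n) (Fin n) ℂ) (hM : M.IsHermitian) :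
    M.PosSemidef ↔
      ∀ S : Finset (Fin n),
        0 ≤ (M.submatrix (fun i : S => (i : Fin n)) (fun j : S => (j : Fin n))).det :=
  ⟨fun h _ => (h.submatrix _).det_nonneg, fun h => hM.posSemidef_of_det_add_smul_one_ne_zero
    fun _ ht => (Matrix.det_add_smul_one_pos h (Complex.zero_lt_real.mpr ht)).ne'⟩
end

section
/- Let D₁, D₂ be Hermitian biadditive normalized functionals on event algebras 𝒜₁, 𝒜₂ with all entries of D₂ real and nonnegative (positive-entry). If Re(D₁(A,B)) ≥ 0 for all A,B ∈ 𝒜₁, then the product functional D₁⊙D₂ on the product event algebra, defined on products by (D₁⊙D₂)(A₁×A₂, B₁×B₂) = D₁(A₁,B₁)·D₂(A₂,B₂) and extended by biadditivity, satisfies (D₁⊙D₂)(E,E) ≥ 0 for every event E in the product algebra. -/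
open ComplexOrder

theorem stmt_16 {Ω₁ Ω₂ : Type*} (𝒜₁ : Set (Set Ω₁)) (𝒜₂ : Set (Set Ω₂))
    (D₁ : Set Ω₁ → Set Ω₁ → ℂ) (D₂ : Set Ω₂ → Set Ω₂ → ℂ)
    -- event algebras
    (h₁compl : ∀ A ∈ 𝒜₁, Aᶜ ∈ 𝒜₁) (h₁union : ∀ A ∈ 𝒜₁, ∀ B ∈ 𝒜₁, A ∪ B ∈ 𝒜₁)
    (h₂compl : ∀ A ∈ 𝒜₂, Aᶜ ∈ 𝒜₂) (h₂union : ∀ A ∈ 𝒜₂, ∀ B ∈ 𝒜₂, A ∪ B ∈ 𝒜₂)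
    -- D₁, D₂ Hermitian
    (h₁herm : ∀ A ∈ 𝒜₁, ∀ B ∈ 𝒜₁, D₁ A B = (starRingEnd ℂ) (D₁ B A))
    (h₂herm : ∀ A ∈ 𝒜₂, ∀ B ∈ 𝒜₂, D₂ A B = (starRingEnd ℂ) (D₂ B A))
    -- biadditivity over disjoint unions
    (h₁add : ∀ A ∈ 𝒜₁, ∀ B ∈ 𝒜₁, ∀ C ∈ 𝒜₁, B ∩ C = ∅ → D₁ A (B ∪ C) = D₁ A B + D₁ A C)
    (h₂add : ∀ A ∈ 𝒜₂, ∀ B ∈ 𝒜₂, ∀ C ∈ 𝒜₂, B ∩ C = ∅ → D₂ A (B ∪ C) = D₂ A B + D₂ A C)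
    -- normalization
    (h₁norm : D₁ Set.univ Set.univ = 1) (h₂norm : D₂ Set.univ Set.univ = 1)
    -- D₂ positive-entry
    (h₂pos : ∀ A ∈ 𝒜₂, ∀ B ∈ 𝒜₂, 0 ≤ D₂ A B)
    -- Re D₁ ≥ 0
    (h₁re : ∀ A ∈ 𝒜₁, ∀ B ∈ 𝒜₁, 0 ≤ (D₁ A B).re) :
    -- the product functional is nonnegative on every diagonal entry:
    -- every event E of the product algebra is a finite disjoint union
    -- E = ⨆ i, E₁ i ×ˢ E₂ i and (D₁⊙D₂)(E,E) = ∑ i ∑ j D₁(E₁ᵢ,E₁ⱼ)·D₂(E₂ᵢ,E₂ⱼ)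
    ∀ (k : ℕ) (E₁ : Fin k → Set Ω₁) (E₂ : Fin k → Set Ω₂),
      (∀ i, E₁ i ∈ 𝒜₁) → (∀ i, E₂ i ∈ 𝒜₂) →
      (Pairwise fun i j => Disjoint (E₁ i ×ˢ E₂ i) (E₁ j ×ˢ E₂ j)) →
      0 ≤ ∑ i, ∑ j, D₁ (E₁ i) (E₁ j) * D₂ (E₂ i) (E₂ j) := by
  intro k E₁ E₂ hE₁ hE₂ _
  have himD2 : ∀ i j, (D₂ (E₂ i) (E₂ j)).im = 0 := fun i j =>
    (Complex.nonneg_iff.mp (h₂pos _ (hE₂ i) _ (hE₂ j))).2.symm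
  have hreD2 : ∀ i j, 0 ≤ (D₂ (E₂ i) (E₂ j)).re := fun i j =>
    (Complex.nonneg_iff.mp (h₂pos _ (hE₂ i) _ (hE₂ j))).1
  rw [Complex.nonneg_iff]
  constructor
  · simp only [Complex.re_sum, Complex.mul_re]
    apply Finset.sum_nonneg; intro i _
    apply Finset.sum_nonneg; intro j _
    rw [himD2 i j]
    simpa using mul_nonneg (h₁re _ (hE₁ i) _ (hE₁ j)) (hreD2 i j)
  · simp only [Complex.im_sum, Complex.mul_im]
    have hsimp : ∀ i j, (D₁ (E₁ i) (E₁ j)).re * (D₂ (E₂ i) (E₂ j)).im +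
        (D₁ (E₁ i) (E₁ j)).im * (D₂ (E₂ i) (E₂ j)).re
        = (D₁ (E₁ i) (E₁ j)).im * (D₂ (E₂ i) (E₂ j)).re := by
      intro i j; rw [himD2 i j]; ring
    simp only [hsimp]
    have hanti : ∀ i j, (D₁ (E₁ i) (E₁ j)).im * (D₂ (E₂ i) (E₂ j)).re
        = -((D₁ (E₁ j) (E₁ i)).im * (D₂ (E₂ j) (E₂ i)).re) := by
      intro i j
      rw [h₁herm _ (hE₁ i) _ (hE₁ j), h₂herm _ (hE₂ i) _ (hE₂ j)]
      simp [Complex.conj_im, Complex.conj_re]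
    set S := ∑ i, ∑ j, (D₁ (E₁ i) (E₁ j)).im * (D₂ (E₂ i) (E₂ j)).re with hS
    have hSneg : S = -S := by
      calc S = ∑ j, ∑ i, (D₁ (E₁ i) (E₁ j)).im * (D₂ (E₂ i) (E₂ j)).re :=
        Finset.sum_comm
      _ = ∑ j, ∑ i, -((D₁ (E₁ j) (E₁ i)).im * (D₂ (E₂ j) (E₂ i)).re) := by
          simp only [← hanti]
      _ = -S := by rw [hS]; simp
    linarith
end

section
/- Let M and N be k×k complex matrices with M Hermitian. Define for positive integers p, q and complex numbers dAA, dBB, dAB (with dAB = r·e^{iθ}, r > 0, dAA, dBB ≥ 0 real) the quantity F(p,q) = (dAA^p + dBB^p)·EE(N)^q + 2 r^p cos(pθ)·EO(N)^q, where EE and EO are the even-even and even-odd permutation sums. If EE(N) < EO(N), EE(N) and EO(N) are real, θ ≠ 0 with θ ∈ (−π,π], and dAA + dBB > 0 with dAA, dBB ≥ 0, then there exist positive integers p, q such that F(p,q) < 0. -/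
lemma exists_cos_neg' {θ : ℝ} (h0 : 0 < θ) (h1 : θ ≤ Real.pi) :
    ∃ p : ℕ, 0 < p ∧ Real.cos (p * θ) < 0 := by
  rcases eq_or_lt_of_le h1 with h | h
  · refine ⟨1, one_pos, ?_⟩
    rw [h]; push_cast; rw [one_mul, Real.cos_pi]; norm_num
  · refine ⟨⌊(Real.pi / 2) / θ⌋₊ + 1, Nat.succ_pos _, ?_⟩
    have hπ := Real.pi_pos
    have h2 : (Real.pi / 2) / θ < (⌊(Real.pi / 2) / θ⌋₊ + 1 : ℕ) := by
      push_cast; exact Nat.lt_floor_add_one _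
    have h3 : (⌊(Real.pi / 2) / θ⌋₊ : ℝ) ≤ (Real.pi / 2) / θ :=
      Nat.floor_le (by positivity)
    have h2' : Real.pi / 2 < (⌊(Real.pi / 2) / θ⌋₊ + 1 : ℕ) * θ := by
      rw [← div_lt_iff₀ h0]; exact h2
    have h3' : ((⌊(Real.pi / 2) / θ⌋₊ + 1 : ℕ) : ℝ) * θ ≤ Real.pi / 2 + θ := by
      push_cast
      have := mul_le_mul_of_nonneg_right h3 h0.le
      rw [div_mul_cancel₀ _ (ne_of_gt h0)] at this
      nlinarith
    exact Real.cos_neg_of_pi_div_two_lt_of_lt h2' (by nlinarith)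

lemma exists_cos_nonneg' {θ : ℝ} (h0 : 0 < θ) (h1 : θ ≤ Real.pi) :
    ∃ p : ℕ, 0 < p ∧ 0 ≤ Real.cos (p * θ) := by
  refine ⟨⌊(3 * Real.pi / 2) / θ⌋₊ + 1, Nat.succ_pos _, ?_⟩
  have hπ := Real.pi_pos
  have h2 : (3 * Real.pi / 2) / θ < (⌊(3 * Real.pi / 2) / θ⌋₊ + 1 : ℕ) := by
    push_cast; exact Nat.lt_floor_add_one _
  have h3 : (⌊(3 * Real.pi / 2) / θ⌋₊ : ℝ) ≤ (3 * Real.pi / 2) / θ :=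
    Nat.floor_le (by positivity)
  have h2' : 3 * Real.pi / 2 < (⌊(3 * Real.pi / 2) / θ⌋₊ + 1 : ℕ) * θ := by
    rw [← div_lt_iff₀ h0]; exact h2
  have h3' : ((⌊(3 * Real.pi / 2) / θ⌋₊ + 1 : ℕ) : ℝ) * θ ≤ 3 * Real.pi / 2 + θ := by
    push_cast
    have := mul_le_mul_of_nonneg_right h3 h0.le
    rw [div_mul_cancel₀ _ (ne_of_gt h0)] at this
    nlinarith
  have := (Real.cos_sub_two_pi ((⌊(3 * Real.pi / 2) / θ⌋₊ + 1 : ℕ) * θ)).symm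
  rw [show ((⌊(3 * Real.pi / 2) / θ⌋₊ + 1 : ℕ) : ℝ) * θ =
      ((⌊(3 * Real.pi / 2) / θ⌋₊ + 1 : ℕ) * θ - 2 * Real.pi) + 2 * Real.pi by ring,
    Real.cos_add_two_pi]
  apply Real.cos_nonneg_of_mem_Icc
  constructor <;> [nlinarith; nlinarith]

open Finset in
theorem stmt_18 {k : ℕ} (M N : Matrix (Fin k) (Fin k) ℂ) (hM : M.IsHermitian)
    (ee eo : ℝ)
    (hee : (∑ π ∈ Finset.univ.filter (fun π : Equiv.Perm (Fin k) => Equiv.Perm.sign π = 1),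
        ∑ π' ∈ Finset.univ.filter (fun π' : Equiv.Perm (Fin k) => Equiv.Perm.sign π' = 1),
          ∏ i, N (π i) (π' i)) = (ee : ℂ))
    (heo : (∑ π ∈ Finset.univ.filter (fun π : Equiv.Perm (Fin k) => Equiv.Perm.sign π = 1),
        ∑ π' ∈ Finset.univ.filter (fun π' : Equiv.Perm (Fin k) => Equiv.Perm.sign π' = -1),
          ∏ i, N (π i) (π' i)) = (eo : ℂ))
    (hlt : ee < eo)
    (θ r dAA dBB : ℝ) (hθ0 : θ ≠ 0) (hθl : -Real.pi < θ) (hθu : θ ≤ Real.pi)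
    (hr : 0 < r) (hdAA : 0 ≤ dAA) (hdBB : 0 ≤ dBB) (hsum : 0 < dAA + dBB)
    (F : ℕ → ℕ → ℝ)
    (hF : ∀ p q, F p q =
      (dAA ^ p + dBB ^ p) * ee ^ q + 2 * r ^ p * Real.cos (p * θ) * eo ^ q) :
    ∃ p q : ℕ, 0 < p ∧ 0 < q ∧ F p q < 0 := by
  have ht0 : 0 < |θ| := abs_pos.mpr hθ0
  have ht1 : |θ| ≤ Real.pi := abs_le.mpr ⟨hθl.le, hθu⟩
  have hcos : ∀ p : ℕ, Real.cos (p * θ) = Real.cos (p * |θ|) := by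
    intro p
    rw [← Real.cos_abs (p * θ), abs_mul, Nat.abs_cast]
  have hApos : ∀ p : ℕ, 0 < dAA ^ p + dBB ^ p := by
    intro p
    rcases lt_or_ge 0 dAA with h | h
    · exact add_pos_of_pos_of_nonneg (pow_pos h p) (pow_nonneg hdBB p)
    · have hA0 : dAA = 0 := le_antisymm h hdAA
      have hB : 0 < dBB := by nlinarith
      exact add_pos_of_nonneg_of_pos (pow_nonneg hdAA p) (pow_pos hB p)
  rcases le_or_gt eo 0 with heo0 | heo0
  · obtain ⟨p, hp, hc⟩ := exists_cos_nonneg' ht0 ht1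
    refine ⟨p, 1, hp, one_pos, ?_⟩
    rw [hF, hcos p]
    have h1 : ee < 0 := lt_of_lt_of_le hlt heo0
    have hA := hApos p
    have hrp : 0 < r ^ p := pow_pos hr p
    have t1 : (dAA ^ p + dBB ^ p) * ee ^ 1 < 0 := by nlinarith
    have t2 : 2 * r ^ p * Real.cos (p * |θ|) * eo ^ 1 ≤ 0 := by
      rw [pow_one]
      exact mul_nonpos_of_nonneg_of_nonpos (by positivity) heo0
    linarith
  · rcases le_or_gt ee 0 with hee0 | hee0
    · obtain ⟨p, hp, hc⟩ := exists_cos_neg' ht0 ht1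
      refine ⟨p, 1, hp, one_pos, ?_⟩
      rw [hF, hcos p]
      have hA := hApos p
      have hrp : 0 < r ^ p := pow_pos hr p
      have t1 : (dAA ^ p + dBB ^ p) * ee ^ 1 ≤ 0 := by nlinarith
      have t2 : 2 * r ^ p * Real.cos (p * |θ|) * eo ^ 1 < 0 := by
        rw [pow_one]
        exact mul_neg_of_neg_of_pos (mul_neg_of_pos_of_neg (by positivity) hc) heo0
      linarith
    · obtain ⟨p, hp, hc⟩ := exists_cos_neg' ht0 ht1
      have hA := hApos p
      have hrp : 0 < r ^ p := pow_pos hr p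
      have heo' : 0 < eo := hee0.trans hlt
      have hcpos : 0 < -(2 * r ^ p * Real.cos (p * |θ|)) := by nlinarith
      have hx1 : ee / eo < 1 := (div_lt_one heo').mpr hlt
      have hx0 : 0 ≤ ee / eo := div_nonneg hee0.le heo'.le
      obtain ⟨n, hn⟩ := exists_pow_lt_of_lt_one (div_pos hcpos hA) hx1
      refine ⟨p, n + 1, hp, Nat.succ_pos _, ?_⟩
      rw [hF, hcos p]
      have hmono : (ee / eo) ^ (n + 1) ≤ (ee / eo) ^ n :=
        pow_le_pow_of_le_one hx0 hx1.le (Nat.le_succ n)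
      have hq : (ee / eo) ^ (n + 1) < -(2 * r ^ p * Real.cos (p * |θ|)) / (dAA ^ p + dBB ^ p) :=
        lt_of_le_of_lt hmono hn
      have heoq : 0 < eo ^ (n + 1) := pow_pos heo' _
      rw [div_pow, div_lt_div_iff₀ heoq hA] at hq
      nlinarith [hq]
end
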